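/- arXiv:2003.06803 — 6 statements merged into one kernel-verified Lean document; each statement's English description precedes it below -/
import Mathlib

section
/- If ψ : V(G) → I is a perfect coloring of a graph G, Φ = {φ₁, …, φ_k} is a family of perfect colorings of a graph H using pairwise disjoint color sets J₁, …, J_k, then the coloring of the lexicographic product G·H defined by (v₁, v₂) ↦ φ_{ψ(v₁)}(v₂) is a perfect coloring of G·H. -/
/-- The infinite path graph on the integers. -/
def pathGraph : SimpleGraph ℤ := SimpleGraph.fromRel (fun u v => v = u + 1)

/-- Number of neighbors of `v` colored `j` under coloring `c`. -/
noncomputable def nbrCount {V I : Type*} (G : SimpleGraph V) (c : V → I) (v : V) (j : I) : ℕ :=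
  {u | G.Adj v u ∧ c u = j}.ncard

/-- A coloring is perfect if the number of neighbors of each color depends only
on the color of the vertex. -/
def IsPerfectColoring {V I : Type*} (G : SimpleGraph V) (c : V → I) : Prop :=
  ∀ v w, c v = c w → ∀ j, nbrCount G c v j = nbrCount G c w j

/-- Lexicographic product of two simple graphs. -/
def lexProd {V W : Type*} (G : SimpleGraph V) (H : SimpleGraph W) : SimpleGraph (V × W) :=
  SimpleGraph.fromRel (fun p q => G.Adj p.1 q.1 ∨ (p.1 = q.1 ∧ H.Adj p.2 q.2))

/-!
A neighbour of `(v, w)` in `G·H` either is `(u, x)` with `u` a `G`-neighbour of `v`, or is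
`(v, x)` with `x` an `H`-neighbour of `w`. Those of colour `j` of the first kind are in bijection
with the pairs `(u, x)` where `u` is a `G`-neighbour of `v`, of colour `i` say, and `φᵢ x = j`;
so their number depends only on the colour degrees of `v` in `ψ`, hence only on `ψ v`. Those of
the second kind are the `H`-neighbours of `w` of colour `j` under `φ_{ψ v}`. Since the colour sets
are disjoint, the colour `φ_{ψ v} w` of `(v, w)` determines `ψ v`, and the claim follows.
Working with bijections rather than with `ncard` avoids its junk value `0` on infinite sets.
-/

def nbrsOfColor {V I : Type*} (G : SimpleGraph V) (c : V → I) (v : V) (j : I) : Set V :=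
  {u | G.Adj v u ∧ c u = j}

section Perfect

variable {V I : Type*} {G : SimpleGraph V} {c : V → I}

theorem isPerfectColoring_of_nonempty_equiv
    (h : ∀ v w, c v = c w → ∀ j, Nonempty (nbrsOfColor G c v j ≃ nbrsOfColor G c w j)) :
    IsPerfectColoring G c :=
  fun v w hvw j => Set.ncard_congr' (h v w hvw j).some

theorem IsPerfectColoring.nonempty_equiv (hc : IsPerfectColoring G c)
    (hG : ∀ v, (G.neighborSet v).Finite) {v w : V} (hvw : c v = c w) (j : I) :
    Nonempty (nbrsOfColor G c v j ≃ nbrsOfColor G c w j) := by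
  have (u : V) : Finite (nbrsOfColor G c u j) := (hG u).subset fun _ hx => hx.1
  rw [← Finite.card_eq, Nat.card_coe_set_eq, Nat.card_coe_set_eq]
  exact hc v w hvw j

end Perfect

section LexProd

variable {V W I J K : Type*} (G : SimpleGraph V) (H : SimpleGraph W)

theorem lexProd_adj {p q : V × W} :
    (lexProd G H).Adj p q ↔ G.Adj p.1 q.1 ∨ (p.1 = q.1 ∧ H.Adj p.2 q.2) := by
  refine ⟨fun ⟨_, h⟩ => h.elim id (Or.imp G.adj_symm fun h => ⟨h.1.symm, H.adj_symm h.2⟩),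
    fun h => ⟨?_, Or.inl h⟩⟩
  rintro rfl
  rcases h with h | ⟨_, h⟩ <;> exact SimpleGraph.irrefl _ h

theorem nbrsOfColor_lexProd (c : V × W → K) (v : V) (w : W) (k : K) :
    nbrsOfColor (lexProd G H) c (v, w) k =
      {q | G.Adj v q.1 ∧ c q = k} ∪ Prod.mk v '' nbrsOfColor H (fun x => c (v, x)) w k := by
  ext ⟨u, x⟩
  simp only [nbrsOfColor, lexProd_adj, Set.mem_union, Set.mem_image, Set.mem_ofPred_eq,
    Prod.mk.injEq]
  constructor
  · rintro ⟨hG | ⟨rfl, hH⟩, hc⟩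
    exacts [.inl ⟨hG, hc⟩, .inr ⟨x, ⟨hH, hc⟩, rfl, rfl⟩]
  · rintro (⟨hG, hc⟩ | ⟨x, ⟨hH, hc⟩, rfl, rfl⟩)
    exacts [⟨.inl hG, hc⟩, ⟨.inr ⟨rfl, hH⟩, hc⟩]

open Classical in
noncomputable def nbrsOfColorLexProdEquiv (c : V × W → K) (v : V) (w : W) (k : K) :
    nbrsOfColor (lexProd G H) c (v, w) k ≃
      {q : V × W | G.Adj v q.1 ∧ c q = k} ⊕ nbrsOfColor H (fun x => c (v, x)) w k :=
  (Equiv.setCongr (nbrsOfColor_lexProd G H c v w k)).trans <|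
    (Equiv.Set.union <| Set.disjoint_left.mpr <| by
      rintro _ ⟨hG, -⟩ ⟨x, -, rfl⟩; exact G.irrefl hG).trans <|
    Equiv.sumCongr (Equiv.refl _) (Equiv.Set.image _ _ (Prod.mk_right_injective v)).symm

def adjFstEquivSigma (ψ : V → I) (Φ : I → W → J) (v : V) (j : J) :
    {q : V × W | G.Adj v q.1 ∧ Φ (ψ q.1) q.2 = j} ≃
      Σ i, nbrsOfColor G ψ v i × {x | Φ i x = j} where
  toFun q := ⟨ψ q.1.1, ⟨q.1.1, q.2.1, rfl⟩, ⟨q.1.2, q.2.2⟩⟩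
  invFun := fun ⟨_, ⟨u, hu, hi⟩, ⟨x, hx⟩⟩ => ⟨(u, x), hu, hi ▸ hx⟩
  left_inv _ := rfl
  right_inv := by rintro ⟨i, ⟨u, hu, rfl⟩, ⟨x, hx⟩⟩; rfl

theorem nonempty_equiv_adjFst {ψ : V → I} {v v' : V}
    (h : ∀ i, Nonempty (nbrsOfColor G ψ v i ≃ nbrsOfColor G ψ v' i)) (Φ : I → W → J) (j : J) :
    Nonempty ({q : V × W | G.Adj v q.1 ∧ Φ (ψ q.1) q.2 = j} ≃
      {q : V × W | G.Adj v' q.1 ∧ Φ (ψ q.1) q.2 = j}) :=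
  ⟨(adjFstEquivSigma G ψ Φ v j).trans <|
    (Equiv.sigmaCongrRight fun i => (h i).some.prodCongr (Equiv.refl _)).trans
      (adjFstEquivSigma G ψ Φ v' j).symm⟩

end LexProd

/-- Disjunctive colorings of a lexicographic product are perfect. -/
theorem disjunctive_coloring_isPerfect {V W I J : Type*}
    (G : SimpleGraph V) (H : SimpleGraph W)
    (hGlf : ∀ v, (G.neighborSet v).Finite) (hHlf : ∀ w, (H.neighborSet w).Finite)
    (ψ : V → I) (hψ : IsPerfectColoring G ψ)
    (Φ : I → W → J) (hΦ : ∀ i, IsPerfectColoring H (Φ i))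
    (hdisj : ∀ i i', i ≠ i' → ∀ w w', Φ i w ≠ Φ i' w') :
    IsPerfectColoring (lexProd G H) (fun p => Φ (ψ p.1) p.2) := by
  refine isPerfectColoring_of_nonempty_equiv ?_
  rintro ⟨v, w⟩ ⟨v', w'⟩ (hc : Φ (ψ v) w = Φ (ψ v') w') j
  have hψvv' : ψ v = ψ v' := by_contra fun hne => hdisj _ _ hne w w' hc
  obtain ⟨eG⟩ := nonempty_equiv_adjFst G (hψ.nonempty_equiv hGlf hψvv') Φ j
  obtain ⟨eH⟩ : Nonempty (nbrsOfColor H (Φ (ψ v)) w j ≃ nbrsOfColor H (Φ (ψ v')) w' j) := by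
    rw [hψvv'] at hc ⊢
    exact (hΦ _).nonempty_equiv hHlf hc j
  exact ⟨(nbrsOfColorLexProdEquiv G H _ v w j).trans <|
    (eG.sumCongr eH).trans (nbrsOfColorLexProdEquiv G H _ v' w' j).symm⟩
end

section
/- Let G be a finite regular simple graph with a perfect coloring φ. Define colors i and j to be equivalent if the coloring obtained from φ by identifying colors i and j is still perfect. Then this relation is an equivalence relation on the set of colors used by φ. -/
/-!
Write `m a b` for the number of neighbours of colour `b` of a vertex of colour `a`. Identifying
`j` with `i` keeps the colouring perfect iff the rows `i` and `j` of `m` agree outside the columns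
`i`, `j` and have the same sum over these two columns. Symmetry is then free, since identifying `i`
with `j` is a relabelling of identifying `j` with `i`. For transitivity, chaining the rows handles
every entry except `m i j = m k j`, which follows from the double counting identity
`n a * m a b = n b * m b a`, `n a` being the size of the class of `a`.
-/

section Relabel

variable {V I J : Type*} {G : SimpleGraph V}

lemma nbrCount_comp_equiv (c : V → I) (e : I ≃ J) (v : V) (l : J) :
    nbrCount G (e ∘ c) v l = nbrCount G c v (e.symm l) := by
  simp only [nbrCount, Function.comp_apply, ← Equiv.eq_symm_apply]

lemma IsPerfectColoring.comp_equiv {c : V → I} (hc : IsPerfectColoring G c) (e : I ≃ J) :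
    IsPerfectColoring G (e ∘ c) := by
  intro v w hvw l
  simp only [nbrCount_comp_equiv]
  exact hc v w (e.injective hvw) _

end Relabel

section Merge

variable {V I : Type*} [DecidableEq I] {G : SimpleGraph V} {φ : V → I} {i j : I}

def mergeColors (φ : V → I) (i j : I) : V → I := fun v => if φ v = j then i else φ v

@[simp]
lemma mergeColors_self (φ : V → I) (i : I) : mergeColors φ i i = φ := by
  funext v
  by_cases h : φ v = i <;> simp [mergeColors, h]

lemma mergeColors_comm (φ : V → I) (i j : I) :
    mergeColors φ j i = Equiv.swap i j ∘ mergeColors φ i j := by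
  funext v
  by_cases hi : φ v = i <;> by_cases hj : φ v = j <;>
    simp [mergeColors, hi, hj, Equiv.swap_apply_of_ne_of_ne]

lemma mergeColors_apply_eq_apply (φ : V → I) (v w : V) :
    mergeColors φ (φ v) (φ w) v = mergeColors φ (φ v) (φ w) w := by
  by_cases h : φ v = φ w <;> simp [mergeColors, h]

lemma eq_or_of_mergeColors_eq {v w : V} (h : mergeColors φ i j v = mergeColors φ i j w) :
    φ v = φ w ∨ (φ v = i ∧ φ w = j) ∨ (φ v = j ∧ φ w = i) := by
  unfold mergeColors at h
  split_ifs at h <;> grind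

lemma nbrCount_mergeColors_of_ne (v : V) {l : I} (hli : l ≠ i) (hlj : l ≠ j) :
    nbrCount G (mergeColors φ i j) v l = nbrCount G φ v l := by
  unfold nbrCount mergeColors
  congr 1
  ext u
  by_cases h : φ u = j <;> simp [h, hli.symm, hlj.symm]

lemma nbrCount_mergeColors_right (hij : i ≠ j) (v : V) :
    nbrCount G (mergeColors φ i j) v j = 0 := by
  unfold nbrCount mergeColors
  convert Set.ncard_empty V
  ext u
  by_cases h : φ u = j <;> simp [h, hij]

lemma nbrCount_mergeColors_left [Finite V] (hij : i ≠ j) (v : V) :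
    nbrCount G (mergeColors φ i j) v i = nbrCount G φ v i + nbrCount G φ v j := by
  unfold nbrCount
  rw [← Set.ncard_union_eq]
  · congr 1
    ext u
    by_cases h : φ u = j <;> simp [mergeColors, h, hij.symm]
  · exact Set.disjoint_left.2 fun u ⟨_, hu⟩ ⟨_, hu'⟩ => hij (hu.symm.trans hu')

lemma nbrCount_mergeColors_eq_iff [Finite V] (hij : i ≠ j) (v w : V) :
    (∀ l, nbrCount G (mergeColors φ i j) v l = nbrCount G (mergeColors φ i j) w l) ↔
      (∀ l, l ≠ i → l ≠ j → nbrCount G φ v l = nbrCount G φ w l) ∧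
        nbrCount G φ v i + nbrCount G φ v j = nbrCount G φ w i + nbrCount G φ w j := by
  constructor
  · intro h
    refine ⟨fun l hli hlj => ?_, ?_⟩
    · simpa only [nbrCount_mergeColors_of_ne _ hli hlj] using h l
    · simpa only [nbrCount_mergeColors_left hij] using h i
  · rintro ⟨hoff, hsum⟩ l
    rcases eq_or_ne l j with rfl | hlj
    · rw [nbrCount_mergeColors_right hij, nbrCount_mergeColors_right hij]
    rcases eq_or_ne l i with rfl | hli
    · rw [nbrCount_mergeColors_left hij, nbrCount_mergeColors_left hij, hsum]
    rw [nbrCount_mergeColors_of_ne _ hli hlj, nbrCount_mergeColors_of_ne _ hli hlj, hoff l hli hlj]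

lemma IsPerfectColoring.nbrCount_mergeColors_eq [Finite V] (hφ : IsPerfectColoring G φ)
    {v w : V} (h : φ v = φ w) (l : I) :
    nbrCount G (mergeColors φ i j) v l = nbrCount G (mergeColors φ i j) w l := by
  rcases eq_or_ne i j with rfl | hij
  · simpa using hφ v w h l
  · refine (nbrCount_mergeColors_eq_iff hij v w).2 ⟨fun l _ _ => hφ v w h l, ?_⟩ l
    rw [hφ v w h i, hφ v w h j]

lemma IsPerfectColoring.mergeColors_of_nbrCount_eq [Finite V] (hφ : IsPerfectColoring G φ)
    {vi vj : V} (hvi : φ vi = i) (hvj : φ vj = j)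
    (h : ∀ l, nbrCount G (mergeColors φ i j) vi l = nbrCount G (mergeColors φ i j) vj l) :
    IsPerfectColoring G (mergeColors φ i j) := by
  intro v w hvw l
  rcases eq_or_of_mergeColors_eq hvw with hc | ⟨hv, hw⟩ | ⟨hv, hw⟩
  · exact hφ.nbrCount_mergeColors_eq hc l
  · rw [hφ.nbrCount_mergeColors_eq (hv.trans hvi.symm),
      hφ.nbrCount_mergeColors_eq (hw.trans hvj.symm), h]
  · rw [hφ.nbrCount_mergeColors_eq (hv.trans hvj.symm),
      hφ.nbrCount_mergeColors_eq (hw.trans hvi.symm), h]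

end Merge

section ColorClasses

open Finset

variable {V I : Type*} [Fintype V] [DecidableEq I] {G : SimpleGraph V} {φ : V → I}

lemma nbrCount_eq_card_bipartiteAbove [DecidableRel G.Adj] (φ : V → I) (v : V) (a : I) :
    nbrCount G φ v a = #(({u | φ u = a} : Finset V).bipartiteAbove G.Adj v) := by
  rw [nbrCount, ← Set.ncard_coe_finset]
  congr 1
  ext u
  simp [bipartiteAbove, and_comm]

/-- Both sides count the edges between the color classes of `v` and `w`. -/
lemma IsPerfectColoring.card_mul_nbrCount_comm (hφ : IsPerfectColoring G φ) (v w : V) :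
    #{u | φ u = φ v} * nbrCount G φ v (φ w) = #{u | φ u = φ w} * nbrCount G φ w (φ v) := by
  classical
  have hclass : ∀ x y : V,
      ∑ u ∈ {u | φ u = φ x}, nbrCount G φ u (φ y) = #{u | φ u = φ x} * nbrCount G φ x (φ y) :=
    fun x y => sum_const_nat fun u hu => hφ u x (by simpa using hu) _
  rw [← hclass, ← hclass]
  simp only [nbrCount_eq_card_bipartiteAbove]
  rw [sum_card_bipartiteAbove_eq_sum_card_bipartiteBelow]
  refine sum_congr rfl fun u _ => ?_
  simp only [bipartiteBelow, bipartiteAbove, G.adj_comm]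

lemma IsPerfectColoring.mergeColors_trans (hφ : IsPerfectColoring G φ) {i j k : I}
    (hi : i ∈ Set.range φ) (hj : j ∈ Set.range φ) (hk : k ∈ Set.range φ)
    (hij : IsPerfectColoring G (mergeColors φ i j))
    (hjk : IsPerfectColoring G (mergeColors φ j k)) :
    IsPerfectColoring G (mergeColors φ i k) := by
  obtain ⟨vi, rfl⟩ := hi
  obtain ⟨vj, rfl⟩ := hj
  obtain ⟨vk, rfl⟩ := hk
  rcases eq_or_ne (φ vi) (φ vj) with hij' | hij'
  · rwa [hij']
  rcases eq_or_ne (φ vj) (φ vk) with hjk' | hjk'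
  · rwa [← hjk']
  rcases eq_or_ne (φ vi) (φ vk) with hik' | hik'
  · rwa [hik', mergeColors_self]
  obtain ⟨hij_off, hij_sum⟩ :=
    (nbrCount_mergeColors_eq_iff hij' vi vj).1 (hij vi vj (mergeColors_apply_eq_apply φ vi vj))
  obtain ⟨hjk_off, hjk_sum⟩ :=
    (nbrCount_mergeColors_eq_iff hjk' vj vk).1 (hjk vj vk (mergeColors_apply_eq_apply φ vj vk))
  have hm_ik : nbrCount G φ vi (φ vk) = nbrCount G φ vj (φ vk) := hij_off _ hik'.symm hjk'.symm
  have hm_ji : nbrCount G φ vj (φ vi) = nbrCount G φ vk (φ vi) := hjk_off _ hij' hik'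
  have hn_pos : 0 < #{u | φ u = φ vi} * #{u | φ u = φ vk} :=
    Nat.mul_pos (card_pos.2 ⟨vi, by simp⟩) (card_pos.2 ⟨vk, by simp⟩)
  -- double counting the edges between the classes of `i`, `j` and `k`
  have hm_j : nbrCount G φ vi (φ vj) = nbrCount G φ vk (φ vj) := by
    refine Nat.eq_of_mul_eq_mul_left hn_pos ?_
    have e_ij := hφ.card_mul_nbrCount_comm vi vj
    have e_ik := hφ.card_mul_nbrCount_comm vi vk
    have e_jk := hφ.card_mul_nbrCount_comm vj vk
    rw [hm_ji] at e_ij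
    rw [hm_ik] at e_ik
    linear_combination #{u | φ u = φ vk} * e_ij - #{u | φ u = φ vj} * e_ik +
      #{u | φ u = φ vi} * e_jk
  refine hφ.mergeColors_of_nbrCount_eq rfl rfl
    ((nbrCount_mergeColors_eq_iff hik' vi vk).2 ⟨fun l hli hlk => ?_, by omega⟩)
  rcases eq_or_ne l (φ vj) with rfl | hlj
  · exact hm_j
  · exact (hij_off l hli hlj).trans (hjk_off l hlj hlk)

end ColorClasses

theorem colorEquiv_isEquivalence_general {V I : Type*} [Fintype V] [DecidableEq I]
    (G : SimpleGraph V)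
    (φ : V → I) (hφ : IsPerfectColoring G φ) :
    Equivalence (fun (i j : Set.range φ) =>
      IsPerfectColoring G (fun v => if φ v = (j : I) then (i : I) else φ v)) := by
  change Equivalence fun i j : Set.range φ => IsPerfectColoring G (mergeColors φ i j)
  refine ⟨fun i => ?_, fun h => ?_, fun hij hjk => ?_⟩
  · rwa [mergeColors_self]
  · rw [mergeColors_comm]
    exact h.comp_equiv _
  · exact hφ.mergeColors_trans (Subtype.mem _) (Subtype.mem _) (Subtype.mem _) hij hjk

/-- On a finite regular graph, equivalence of colors of a perfect coloring
is an equivalence relation on the set of used colors. -/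
theorem colorEquiv_isEquivalence {V I : Type*} [Fintype V] [DecidableEq I]
    (G : SimpleGraph V) (d : ℕ) (hreg : ∀ v, (G.neighborSet v).ncard = d)
    (φ : V → I) (hφ : IsPerfectColoring G φ) :
    Equivalence (fun (i j : Set.range φ) =>
      IsPerfectColoring G (fun v => if φ v = (j : I) then (i : I) else φ v)) :=
  colorEquiv_isEquivalence_general G φ hφ
end

section
/- Every perfect coloring of the infinite path graph C∞ (vertex set ℤ, with u adjacent to v iff |u−v| = 1) with finitely many colors is periodic: there exists a positive integer p such that the color of n equals the color of n + p for all integers n. -/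
/-!
The multiset of colours `{c (n - 1), c (n + 1)}` of the two neighbours of `n` depends only on
`c n`, so the colours of `n` and of one neighbour determine the colour of the other neighbour.
Hence the window `(c n, c (n + 1))` determines the windows at `n ± 1`, and by induction two
equal windows at `x` and `y` make `c` periodic with period `y - x`. With finitely many colours
there are only finitely many windows, so two of them coincide.
-/

lemma pathGraph_adj_iff {u v : ℤ} : pathGraph.Adj u v ↔ v = u - 1 ∨ v = u + 1 := by
  simp only [pathGraph, SimpleGraph.fromRel_adj]
  omega

lemma nbrCount_pathGraph {I : Type*} [DecidableEq I] (c : ℤ → I) (n : ℤ) (j : I) :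
    nbrCount pathGraph c n j = Multiset.count j {c (n - 1), c (n + 1)} := by
  have hset : {u | pathGraph.Adj n u ∧ c u = j} =
      ↑(({n - 1, n + 1} : Finset ℤ).filter (fun u => c u = j)) := by
    ext u
    simp [pathGraph_adj_iff]
  have hpair : ({c (n - 1), c (n + 1)} : Multiset I) = ({n - 1, n + 1} : Finset ℤ).val.map c := by
    rw [Finset.insert_val_of_notMem (by simp; omega)]
    simp
  rw [nbrCount, hset, Set.ncard_coe_finset, hpair, Multiset.count_map, Finset.card_def,
    Finset.filter_val]
  simp only [eq_comm]

lemma IsPerfectColoring.nbrColors_pathGraph_eq {I : Type*} {c : ℤ → I}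
    (hc : IsPerfectColoring pathGraph c) {v w : ℤ} (hvw : c v = c w) :
    ({c (v - 1), c (v + 1)} : Multiset I) = {c (w - 1), c (w + 1)} := by
  classical
  ext j
  rw [← nbrCount_pathGraph, ← nbrCount_pathGraph]
  exact hc v w hvw j

lemma IsPerfectColoring.succ_eq_of_pred_eq {I : Type*} {c : ℤ → I}
    (hc : IsPerfectColoring pathGraph c) {v w : ℤ} (hvw : c v = c w)
    (hpred : c (v - 1) = c (w - 1)) : c (v + 1) = c (w + 1) := by
  have := hc.nbrColors_pathGraph_eq hvw
  rw [hpred] at this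
  simpa using (Multiset.cons_inj_right _).1 this

lemma IsPerfectColoring.pred_eq_of_succ_eq {I : Type*} {c : ℤ → I}
    (hc : IsPerfectColoring pathGraph c) {v w : ℤ} (hvw : c v = c w)
    (hsucc : c (v + 1) = c (w + 1)) : c (v - 1) = c (w - 1) := by
  have := hc.nbrColors_pathGraph_eq hvw
  rw [Multiset.pair_comm, hsucc, Multiset.pair_comm (c (w - 1))] at this
  simpa using (Multiset.cons_inj_right _).1 this

lemma periodic_sub_of_eq_of_succ_of_pred {α : Type*} {f : ℤ → α}
    (hsucc : ∀ a b, f a = f b → f (a + 1) = f (b + 1))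
    (hpred : ∀ a b, f a = f b → f (a - 1) = f (b - 1)) {x y : ℤ} (hxy : f x = f y) :
    Function.Periodic f (y - x) := by
  have shift : ∀ k : ℤ, f (x + k) = f (y + k) := by
    intro k
    induction k using Int.induction_on with
    | zero => simpa using hxy
    | succ k ih => simpa only [add_assoc] using hsucc _ _ ih
    | pred k ih => simpa only [add_sub_assoc] using hpred _ _ ih
  intro n
  calc f (n + (y - x)) = f (y + (n - x)) := by ring_nf
    _ = f (x + (n - x)) := (shift _).symm
    _ = f n := by ring_nf

/-- Every perfect coloring of the infinite path graph with finitely many colors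
is periodic. -/
theorem perfectColoring_path_periodic {I : Type*} [Fintype I]
    (c : ℤ → I) (h : IsPerfectColoring pathGraph c) :
    ∃ p : ℤ, 0 < p ∧ ∀ n : ℤ, c (n + p) = c n := by
  let window : ℤ → I × I := fun n => (c n, c (n + 1))
  have window_succ : ∀ a b, window a = window b → window (a + 1) = window (b + 1) := by
    rintro a b hab
    obtain ⟨h0, h1⟩ := Prod.mk.inj hab
    refine Prod.ext h1 (h.succ_eq_of_pred_eq h1 ?_)
    simpa using h0
  have window_pred : ∀ a b, window a = window b → window (a - 1) = window (b - 1) := by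
    rintro a b hab
    obtain ⟨h0, h1⟩ := Prod.mk.inj hab
    exact Prod.ext (h.pred_eq_of_succ_eq h0 h1) (by simpa [window] using h0)
  obtain ⟨x, y, hne, hxy⟩ := Finite.exists_ne_map_eq_of_infinite window
  have hper := periodic_sub_of_eq_of_succ_of_pred window_succ window_pred hxy
  rcases lt_or_gt_of_ne hne with hlt | hgt
  · exact ⟨y - x, sub_pos.2 hlt, fun n => congrArg Prod.fst (hper n)⟩
  · exact ⟨-(y - x), by omega, fun n => congrArg Prod.fst (hper.neg n)⟩
end

section
/- For every k ≥ 1, the coloring c : ℤ → {0,…,k−1} with period 2k given by c(n) = min(n mod 2k, 2k−1−(n mod 2k)), i.e. on {0,…,2k−1} by c(n) = n if n ≤ k−1 and c(n) = 2k−1−n otherwise (the mirror coloring of type (2,2)), is a perfect coloring of the infinite path graph. -/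
open Classical in
lemma nbrCount_path {I : Type*} (c : ℤ → I) (v : ℤ) (j : I) :
    nbrCount pathGraph c v j
      = (if c (v - 1) = j then 1 else 0) + (if c (v + 1) = j then 1 else 0) := by
  have hset : {u | pathGraph.Adj v u ∧ c u = j}
      = {u : ℤ | (u = v - 1 ∨ u = v + 1) ∧ c u = j} := by
    ext u
    simp only [pathGraph, SimpleGraph.fromRel_adj, Set.mem_setOf_eq]
    constructor
    · rintro ⟨⟨_, h⟩, hc⟩; exact ⟨by omega, hc⟩
    · rintro ⟨h, hc⟩; exact ⟨⟨by omega, by omega⟩, hc⟩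
  unfold nbrCount
  rw [hset]
  by_cases h1 : c (v - 1) = j <;> by_cases h2 : c (v + 1) = j <;> simp [h1, h2]
  · have : {u : ℤ | (u = v - 1 ∨ u = v + 1) ∧ c u = j} = {v - 1, v + 1} := by
      ext u; simp only [Set.mem_setOf_eq, Set.mem_insert_iff, Set.mem_singleton_iff]
      constructor
      · rintro ⟨h, _⟩; exact h
      · rintro (rfl | rfl) <;> simp [h1, h2]
    rw [this, Set.ncard_pair (by omega)]
  · have : {u : ℤ | (u = v - 1 ∨ u = v + 1) ∧ c u = j} = {v - 1} := by
      ext u; simp only [Set.mem_setOf_eq, Set.mem_singleton_iff]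
      constructor
      · rintro ⟨h | h, hc⟩
        · exact h
        · exact absurd (h ▸ hc) h2
      · rintro rfl; exact ⟨Or.inl rfl, h1⟩
    rw [this]; exact ⟨_, rfl⟩
  · have : {u : ℤ | (u = v - 1 ∨ u = v + 1) ∧ c u = j} = {v + 1} := by
      ext u; simp only [Set.mem_setOf_eq, Set.mem_singleton_iff]
      constructor
      · rintro ⟨h | h, hc⟩
        · exact absurd (h ▸ hc) h1
        · exact h
      · rintro rfl; exact ⟨Or.inr rfl, h2⟩
    rw [this]; exact ⟨_, rfl⟩
  · have : {u : ℤ | (u = v - 1 ∨ u = v + 1) ∧ c u = j} = ∅ := by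
      ext u; simp only [Set.mem_setOf_eq, Set.mem_empty_iff_false, iff_false]
      rintro ⟨h | h, hc⟩
      · exact h1 (h ▸ hc)
      · exact h2 (h ▸ hc)
    rw [this, Set.ncard_empty]

/-- The mirror coloring of type (2,2) is a perfect coloring of the infinite path graph. -/
theorem mirror22_coloring_isPerfect (k : ℤ) (hk : 1 ≤ k) :
    IsPerfectColoring pathGraph (fun n : ℤ => min (n % (2 * k)) (2 * k - 1 - n % (2 * k))) := by
  set m : ℤ := 2 * k with hm
  have hmpos : 0 < m := by omega
  set c : ℤ → ℤ := fun n => min (n % m) (m - 1 - n % m) with hc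
  have hres : ∀ a b : ℤ, a % m = b % m → c a = c b := by
    intro a b h; simp only [hc, h]
  -- the residue of -1 - n
  have hneg : ∀ n : ℤ, (-1 - n) % m = m - 1 - n % m := by
    intro n
    have hlt : n % m < m := Int.emod_lt_of_pos n hmpos
    have hge : 0 ≤ n % m := Int.emod_nonneg n (by omega)
    have heq : (-1 - n) = (m - 1 - n % m) + m * (-1 - n / m) := by
      have h := Int.emod_add_mul_ediv n m
      linear_combination h
    rw [heq, Int.add_mul_emod_self_left, Int.emod_eq_of_lt (by omega) (by omega)]
  -- mirror symmetry
  have hmir : ∀ n : ℤ, c (-1 - n) = c n := by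
    intro n
    have hlt : n % m < m := Int.emod_lt_of_pos n hmpos
    have hge : 0 ≤ n % m := Int.emod_nonneg n (by omega)
    simp only [hc, hneg n]
    omega
  intro v w hvw j
  have hvlt : v % m < m := Int.emod_lt_of_pos v hmpos
  have hvge : 0 ≤ v % m := Int.emod_nonneg v (by omega)
  have hwlt : w % m < m := Int.emod_lt_of_pos w hmpos
  have hwge : 0 ≤ w % m := Int.emod_nonneg w (by omega)
  have hcases : v % m = w % m ∨ v % m = m - 1 - w % m := by
    simp only [hc] at hvw
    omega
  have shift : ∀ a b t : ℤ, a % m = b % m → (a + t) % m = (b + t) % m := by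
    intro a b t h
    rw [Int.emod_eq_emod_iff_emod_sub_eq_zero] at h ⊢
    have : a + t - (b + t) = a - b := by ring
    rw [this]; exact h
  rcases hcases with h | h
  · -- same residue
    have h1 : c (v - 1) = c (w - 1) := hres _ _ (by
      have := shift v w (-1) h; simpa [sub_eq_add_neg] using this)
    have h2 : c (v + 1) = c (w + 1) := hres _ _ (shift v w 1 h)
    rw [nbrCount_path, nbrCount_path, h1, h2]
  · -- mirrored residue
    have h' : v % m = (-1 - w) % m := by rw [hneg w]; exact h
    have h1 : c (v + 1) = c (w - 1) := by
      have : (v + 1) % m = (-1 - (w - 1)) % m := by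
        have := shift v (-1 - w) 1 h'
        have e : -1 - w + 1 = -1 - (w - 1) := by ring
        rwa [e] at this
      rw [hres _ _ this, hmir]
    have h2 : c (v - 1) = c (w + 1) := by
      have : (v - 1) % m = (-1 - (w + 1)) % m := by
        have := shift v (-1 - w) (-1) h'
        have e1 : v + -1 = v - 1 := by ring
        have e2 : -1 - w + -1 = -1 - (w + 1) := by ring
        rwa [e1, e2] at this
      rw [hres _ _ this, hmir]
    rw [nbrCount_path, nbrCount_path, h1, h2, add_comm]
end

section
/- Let ψ be a coloring of C∞ · Kₙ̄ (vertex set ℤ × {1,…,n}, (i,j) adjacent to (i',j') iff |i−i'| = 1) that is periodic with period 4 in the first coordinate. Suppose that for every color j and every i ∈ ℤ, N_j(i−1) + N_j(i+1) = N_j(i) + N_j(i+2), where N_j(i) is the number of vertices of color j in block i. Then ψ is a perfect coloring. -/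
/-- The infinite multipath graph `C∞ · Kₙ̄`. -/
def multipathEmpty (n : ℕ) : SimpleGraph (ℤ × Fin n) :=
  lexProd pathGraph (⊥ : SimpleGraph (Fin n))

/-- The number of vertices of color `j` in block `i`. -/
noncomputable def blockCount {n : ℕ} {I : Type*} (ψ : ℤ × Fin n → I) (i : ℤ) (j : I) : ℕ :=
  {w : Fin n | ψ (i, w) = j}.ncard

/-! The number of color-`j` neighbours of a vertex in block `i` is `N_j(i-1) + N_j(i+1)`,
whatever the vertex. The hypothesis says exactly that this quantity does not change from `i`
to `i + 1`, so it is the same for every vertex of the graph. -/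

lemma pathGraph_adj {u v : ℤ} : pathGraph.Adj u v ↔ v = u + 1 ∨ v = u - 1 := by
  simp only [pathGraph, SimpleGraph.fromRel_adj]
  omega

lemma lexProd_bot_adj {V W : Type*} (G : SimpleGraph V) {p q : V × W} :
    (lexProd G ⊥).Adj p q ↔ G.Adj p.1 q.1 := by
  simp only [lexProd, SimpleGraph.fromRel_adj, SimpleGraph.bot_adj, and_false, or_false,
    G.adj_comm q.1, or_self]
  exact and_iff_right_of_imp fun hG hpq => G.ne_of_adj hG (congrArg Prod.fst hpq)

lemma multipathEmpty_adj {n : ℕ} {i i' : ℤ} {a b : Fin n} :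
    (multipathEmpty n).Adj (i, a) (i', b) ↔ i' = i + 1 ∨ i' = i - 1 :=
  (lexProd_bot_adj _).trans pathGraph_adj

lemma nbrCount_multipathEmpty {n : ℕ} {I : Type*} (ψ : ℤ × Fin n → I) (i : ℤ) (a : Fin n)
    (j : I) :
    nbrCount (multipathEmpty n) ψ (i, a) j =
      blockCount ψ (i - 1) j + blockCount ψ (i + 1) j := by
  have hnbrs : {u | (multipathEmpty n).Adj (i, a) u ∧ ψ u = j} =
      Prod.mk (i - 1) '' {w | ψ (i - 1, w) = j} ∪
        Prod.mk (i + 1) '' {w | ψ (i + 1, w) = j} := by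
    ext ⟨i', b⟩
    simp only [Set.mem_ofPred_eq, Set.mem_union, Set.mem_image, multipathEmpty_adj,
      Prod.mk.injEq, exists_eq_right_right]
    aesop
  have hdisj : Disjoint (Prod.mk (i - 1) '' {w : Fin n | ψ (i - 1, w) = j})
      (Prod.mk (i + 1) '' {w | ψ (i + 1, w) = j}) := by
    rw [Set.disjoint_left]
    rintro _ ⟨_, _, rfl⟩ ⟨_, _, h⟩
    simp only [Prod.mk.injEq] at h
    omega
  rw [nbrCount, hnbrs, Set.ncard_union_eq hdisj,
    Set.ncard_image_of_injective _ (Prod.mk_right_injective _),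
    Set.ncard_image_of_injective _ (Prod.mk_right_injective _)]
  rfl

theorem matched_semicolorings_isPerfect_general {n : ℕ} {I : Type*}
    (ψ : ℤ × Fin n → I)
    (h : ∀ (j : I) (i : ℤ),
      blockCount ψ (i - 1) j + blockCount ψ (i + 1) j =
        blockCount ψ i j + blockCount ψ (i + 2) j) :
    IsPerfectColoring (multipathEmpty n) ψ := by
  rintro ⟨i, a⟩ ⟨i', b⟩ - j
  have hperiodic :
      Function.Periodic (fun i => blockCount ψ (i - 1) j + blockCount ψ (i + 1) j) 1 := by
    intro k
    simp only [add_sub_cancel_right, add_assoc, one_add_one_eq_two]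
    exact (h j k).symm
  rw [nbrCount_multipathEmpty, nbrCount_multipathEmpty]
  simpa only [Int.cast_id, mul_one] using (hperiodic.int_mul_eq i).trans (hperiodic.int_mul_eq i').symm

/-- A 4-periodic coloring of `C∞ · Kₙ̄` with matched semicolorings is perfect. -/
theorem matched_semicolorings_isPerfect {n : ℕ} {I : Type*}
    (ψ : ℤ × Fin n → I) (hper : ∀ (i : ℤ) (j : Fin n), ψ (i + 4, j) = ψ (i, j))
    (h : ∀ (j : I) (i : ℤ),
      blockCount ψ (i - 1) j + blockCount ψ (i + 1) j =
        blockCount ψ i j + blockCount ψ (i + 2) j) :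
    IsPerfectColoring (multipathEmpty n) ψ :=
  matched_semicolorings_isPerfect_general ψ h
end

section
/- Let ψ be a perfect coloring of C∞ · Kₙ and suppose there exist colors p ≠ q and an index i such that all vertices of block V_{i+1} have color p, all vertices of block V_{i+2} have color q, and p and q are equivalent colors. Then for every color s ∉ {p,q}, N_s(i) = N_s(i+3), where N_s(m) is the number of vertices of color s in block m. -/
/-- The infinite multipath graph `C∞ · Kₙ`. -/
def multipathComplete (n : ℕ) : SimpleGraph (ℤ × Fin n) :=
  lexProd pathGraph (⊤ : SimpleGraph (Fin n))

/-!
A vertex of block `m` of `C∞ · Kₙ` is adjacent to all of blocks `m - 1` and `m + 1` and to the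
rest of its own block. After merging `q` into `p`, blocks `i + 1` and `i + 2` are monochrome of
color `p`, so perfectness of the merged coloring applies to a vertex of each; neither block
contains the color `s`, so their `s`-neighbours lie exactly in blocks `i` and `i + 3`.
-/

lemma pathGraph_adj_s16 {a b : ℤ} : pathGraph.Adj a b ↔ b = a + 1 ∨ a = b + 1 := by
  simp only [pathGraph, SimpleGraph.fromRel_adj, and_iff_right_iff_imp]
  omega

lemma lexProd_adj_s16 {V W : Type*} {G : SimpleGraph V} {H : SimpleGraph W} {x y : V × W} :
    (lexProd G H).Adj x y ↔ G.Adj x.1 y.1 ∨ (x.1 = y.1 ∧ H.Adj x.2 y.2) := by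
  simp only [lexProd, SimpleGraph.fromRel_adj]
  constructor
  · rintro ⟨-, (h | ⟨he, h⟩) | (h | ⟨he, h⟩)⟩
    · exact Or.inl h
    · exact Or.inr ⟨he, h⟩
    · exact Or.inl h.symm
    · exact Or.inr ⟨he.symm, h.symm⟩
  · rintro (h | ⟨he, h⟩)
    · exact ⟨fun hxy => h.ne (congrArg Prod.fst hxy), Or.inl (Or.inl h)⟩
    · exact ⟨fun hxy => h.ne (congrArg Prod.snd hxy), Or.inl (Or.inr ⟨he, h⟩)⟩

lemma multipathComplete_adj {n : ℕ} {a b : ℤ} {w w' : Fin n} :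
    (multipathComplete n).Adj (a, w) (b, w') ↔ b = a - 1 ∨ b = a + 1 ∨ (b = a ∧ w' ≠ w) := by
  rw [multipathComplete, lexProd_adj_s16, pathGraph_adj_s16, SimpleGraph.top_adj]
  constructor
  · rintro ((h | h) | ⟨h, hw⟩)
    · omega
    · omega
    · exact Or.inr (Or.inr ⟨h.symm, Ne.symm hw⟩)
  · rintro (h | h | ⟨h, hw⟩)
    · omega
    · omega
    · exact Or.inr ⟨h.symm, Ne.symm hw⟩

lemma nbrCount_multipathComplete {n : ℕ} {I : Type*} (c : ℤ × Fin n → I) (m : ℤ) (w : Fin n)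
    (s : I) :
    nbrCount (multipathComplete n) c (m, w) s =
      blockCount c (m - 1) s + blockCount c (m + 1) s + {w' | w' ≠ w ∧ c (m, w') = s}.ncard := by
  have hsplit : {u | (multipathComplete n).Adj (m, w) u ∧ c u = s} =
      (Prod.mk (m - 1) '' {w' | c (m - 1, w') = s} ∪ Prod.mk (m + 1) '' {w' | c (m + 1, w') = s}) ∪
        Prod.mk m '' {w' | w' ≠ w ∧ c (m, w') = s} := by
    ext ⟨b, w'⟩
    simp only [Set.mem_ofPred_eq, Set.mem_union, Set.mem_image, Prod.mk.injEq,
      multipathComplete_adj]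
    constructor
    · rintro ⟨(rfl | rfl | ⟨rfl, hw⟩), hc⟩
      exacts [Or.inl (Or.inl ⟨w', hc, rfl, rfl⟩), Or.inl (Or.inr ⟨w', hc, rfl, rfl⟩),
        Or.inr ⟨w', ⟨hw, hc⟩, rfl, rfl⟩]
    · rintro ((⟨x, hc, rfl, rfl⟩ | ⟨x, hc, rfl, rfl⟩) | ⟨x, ⟨hw, hc⟩, rfl, rfl⟩)
      exacts [⟨Or.inl rfl, hc⟩, ⟨Or.inr (Or.inl rfl), hc⟩, ⟨Or.inr (Or.inr ⟨rfl, hw⟩), hc⟩]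
  have hdisj {a b : ℤ} (hab : a ≠ b) (A B : Set (Fin n)) :
      Disjoint (Prod.mk a '' A) (Prod.mk b '' B) := by
    simp only [Set.disjoint_left, Set.mem_image]
    rintro _ ⟨x, -, rfl⟩ ⟨y, -, hy⟩
    exact hab (congrArg Prod.fst hy).symm
  rw [nbrCount, hsplit, Set.ncard_union_eq, Set.ncard_union_eq (hdisj (by omega) _ _),
    Set.ncard_image_of_injective _ (Prod.mk_right_injective _),
    Set.ncard_image_of_injective _ (Prod.mk_right_injective _),
    Set.ncard_image_of_injective _ (Prod.mk_right_injective _), blockCount, blockCount]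
  exact Set.disjoint_union_left.2 ⟨hdisj (by omega) _ _, hdisj (by omega) _ _⟩

lemma blockCount_eq_zero {n : ℕ} {I : Type*} {c : ℤ × Fin n → I} {m : ℤ} {s : I}
    (h : ∀ w, c (m, w) ≠ s) : blockCount c m s = 0 := by
  simp [blockCount, h]

lemma nbrCount_multipathComplete_of_forall_ne {n : ℕ} {I : Type*} {c : ℤ × Fin n → I} {m : ℤ}
    {s : I} (h : ∀ w, c (m, w) ≠ s) (w : Fin n) :
    nbrCount (multipathComplete n) c (m, w) s = blockCount c (m - 1) s + blockCount c (m + 1) s := by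
  simp [nbrCount_multipathComplete, h]

lemma blockCount_ite_eq {n : ℕ} {I : Type*} [DecidableEq I] (c : ℤ × Fin n → I) (m : ℤ)
    {p q s : I} (hsp : s ≠ p) (hsq : s ≠ q) :
    blockCount (fun v => if c v = q then p else c v) m s = blockCount c m s := by
  simp only [blockCount]
  congr 1
  ext w
  simp only [Set.mem_ofPred_eq]
  split_ifs with hw
  · exact ⟨fun h => absurd h.symm hsp, fun h => absurd (h.symm.trans hw) hsq⟩
  · rfl

theorem multipathComplete_monochrome_blocks_general {n : ℕ} {I : Type*} [DecidableEq I]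
    (ψ : ℤ × Fin n → I)
    (p q : I) (hpq : p ≠ q) (i : ℤ)
    (hp : ∀ w : Fin n, ψ (i + 1, w) = p) (hq : ∀ w : Fin n, ψ (i + 2, w) = q)
    (hequiv : IsPerfectColoring (multipathComplete n)
      (fun v => if ψ v = q then p else ψ v)) :
    ∀ s : I, s ≠ p → s ≠ q → blockCount ψ i s = blockCount ψ (i + 3) s := by
  intro s hsp hsq
  rcases isEmpty_or_nonempty (Fin n) with _ | ⟨⟨w⟩⟩
  · simp [blockCount, Set.eq_empty_of_isEmpty]
  set φ := fun v => if ψ v = q then p else ψ v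
  have hφ1 : ∀ w, φ (i + 1, w) ≠ s := by simp [φ, hp, hpq, Ne.symm hsp]
  have hφ2 : ∀ w, φ (i + 2, w) ≠ s := by simp [φ, hq, Ne.symm hsp]
  have h1 : nbrCount (multipathComplete n) φ (i + 1, w) s = blockCount ψ i s := by
    rw [nbrCount_multipathComplete_of_forall_ne hφ1, add_sub_cancel_right,
      show i + 1 + 1 = i + 2 by ring, blockCount_eq_zero hφ2, add_zero,
      blockCount_ite_eq ψ i hsp hsq]
  have h2 : nbrCount (multipathComplete n) φ (i + 2, w) s = blockCount ψ (i + 3) s := by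
    rw [nbrCount_multipathComplete_of_forall_ne hφ2, show i + 2 - 1 = i + 1 by ring,
      show i + 2 + 1 = i + 3 by ring, blockCount_eq_zero hφ1, zero_add,
      blockCount_ite_eq ψ _ hsp hsq]
  rw [← h1, ← h2]
  exact hequiv _ _ (by simp [φ, hp, hq, hpq]) s

/-- If two consecutive blocks of `C∞ · Kₙ` are monochrome in equivalent colors
`p` and `q`, then the counts of every other color agree in blocks `i` and `i+3`. -/
theorem multipathComplete_monochrome_blocks {n : ℕ} {I : Type*} [DecidableEq I]
    (ψ : ℤ × Fin n → I) (h : IsPerfectColoring (multipathComplete n) ψ)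
    (p q : I) (hpq : p ≠ q) (i : ℤ)
    (hp : ∀ w : Fin n, ψ (i + 1, w) = p) (hq : ∀ w : Fin n, ψ (i + 2, w) = q)
    (hequiv : IsPerfectColoring (multipathComplete n)
      (fun v => if ψ v = q then p else ψ v)) :
    ∀ s : I, s ≠ p → s ≠ q → blockCount ψ i s = blockCount ψ (i + 3) s :=
  multipathComplete_monochrome_blocks_general ψ p q hpq i hp hq hequiv
end
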